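/- arXiv:2604.20115 — 2 statements merged into one kernel-verified Lean document; each statement's English description precedes it below -/
import Mathlib

section
/- Let A be the single-timescale stochastic gradient descent-ascent (SSGDA) algorithm run for T > 1 iterations, where f and g are jointly l-Lipschitz and jointly L-smooth (l = max{l_f, l_g}, L = max{L_f, L_g}), and the non-increasing step sizes satisfy η^{t′} := max{η^t, γ1^t, γ2^t} ≤ c1/(tL) ≤ 1 with c1 = 1/7. Then A is l1(beta) on-average argument stable with beta ≤ C·T·ln(T)/m1 for some constant C depending only on l, L and c1 (not on T or m1). -/
/-!
STATEMENT 3: The single-timescale stochastic gradient descent-ascent algorithm (SSGDA),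
run for `T > 1` iterations on the bilevel minimax problem, with `f, g` jointly
`l`-Lipschitz and jointly `L`-smooth, and non-increasing step sizes satisfying
`max{η^t, γ1^t, γ2^t} ≤ c1/(tL) ≤ 1` with `c1 = 1/7`, is `l1(β)` on-average argument
stable with `β ≤ C·T·ln(T)/m1`, where `C` depends only on `l, L, c1` (not on `T, m1`).
-/

open MeasureTheory Finset

noncomputable section

abbrev Vec (d : ℕ) := EuclideanSpace ℝ (Fin d)

/-- Joint (`ℓ2`) distance between two parameter triples. -/
def jdist {dx dy dz : ℕ} (w w' : Vec dx × Vec dy × Vec dz) : ℝ :=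
  Real.sqrt (‖w.1 - w'.1‖ ^ 2 + ‖w.2.1 - w'.2.1‖ ^ 2 + ‖w.2.2 - w'.2.2‖ ^ 2)

/-- Joint gradient (triple of partial gradients) of `h` at `w`. -/
def jgrad {dx dy dz : ℕ} (h : Vec dx × Vec dy × Vec dz → ℝ) (w : Vec dx × Vec dy × Vec dz) :
    Vec dx × Vec dy × Vec dz :=
  (gradient (fun u => h (u, w.2.1, w.2.2)) w.1,
   gradient (fun v => h (w.1, v, w.2.2)) w.2.1,
   gradient (fun v => h (w.1, w.2.1, v)) w.2.2)

/-- One SSGDA iteration: a stochastic gradient descent step on `y`, an ascent step on `z`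
(both on `g` at the sampled training example `ζ`), then a descent step on `x` (on `f` at
the sampled validation example `ξ`). -/
def ssgdaStep {dx dy dz : ℕ} {Ξ Z2 : Type}
    (f : Vec dx × Vec dy × Vec dz → Ξ → ℝ) (g : Vec dx × Vec dy × Vec dz → Z2 → ℝ)
    (η γ1 γ2 : ℝ) (ξ : Ξ) (ζ : Z2)
    (w : Vec dx × Vec dy × Vec dz) : Vec dx × Vec dy × Vec dz :=
  let x := w.1
  let y := w.2.1
  let z := w.2.2
  let y' := y - γ1 • gradient (fun v => g (x, v, z) ζ) y
  let z' := z + γ2 • gradient (fun v => g (x, y', v) ζ) z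
  let x' := x - η • gradient (fun u => f (u, y', z') ξ) x
  (x', y', z')

/-- The SSGDA iterates: at iteration `t+1` a training index `J (t+1)` and a validation
index `I (t+1)` are used together with step sizes `η (t+1), γ1 (t+1), γ2 (t+1)`. -/
def ssgda {dx dy dz m1 m2 : ℕ} {Ξ Z2 : Type}
    (f : Vec dx × Vec dy × Vec dz → Ξ → ℝ) (g : Vec dx × Vec dy × Vec dz → Z2 → ℝ)
    (η γ1 γ2 : ℕ → ℝ) (ξs : Fin m1 → Ξ) (ζs : Fin m2 → Z2)
    (I : ℕ → Fin m1) (J : ℕ → Fin m2) (w0 : Vec dx × Vec dy × Vec dz) :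
    ℕ → Vec dx × Vec dy × Vec dz
  | 0 => w0
  | t + 1 => ssgdaStep f g (η (t + 1)) (γ1 (t + 1)) (γ2 (t + 1))
      (ξs (I (t + 1))) (ζs (J (t + 1))) (ssgda f g η γ1 γ2 ξs ζs I J w0 t)

/-- Extension of a finitely supported index sequence (uniformly distributed on
`Fin T → Fin n`, i.e. i.i.d. uniform indices) to `ℕ`. -/
def extIdx {T n : ℕ} (hT : 0 < T) (I : Fin T → Fin n) : ℕ → Fin n :=
  fun t => I ⟨t % T, Nat.mod_lt t hT⟩


/-! ### Auxiliary lemmas -/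

lemma jdist_nonneg' {dx dy dz : ℕ} (w w' : Vec dx × Vec dy × Vec dz) : 0 ≤ jdist w w' :=
  Real.sqrt_nonneg _

lemma jdist_self' {dx dy dz : ℕ} (w : Vec dx × Vec dy × Vec dz) : jdist w w = 0 := by
  simp [jdist]

/-- Sum-of-norms distance, dominating `jdist`. -/
def Dsum {dx dy dz : ℕ} (w w' : Vec dx × Vec dy × Vec dz) : ℝ :=
  ‖w.1 - w'.1‖ + ‖w.2.1 - w'.2.1‖ + ‖w.2.2 - w'.2.2‖

lemma jdist_le_Dsum {dx dy dz : ℕ} (w w' : Vec dx × Vec dy × Vec dz) :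
    jdist w w' ≤ Dsum w w' := by
  have h1 : (0:ℝ) ≤ ‖w.1 - w'.1‖ := norm_nonneg _
  have h2 : (0:ℝ) ≤ ‖w.2.1 - w'.2.1‖ := norm_nonneg _
  have h3 : (0:ℝ) ≤ ‖w.2.2 - w'.2.2‖ := norm_nonneg _
  calc jdist w w' ≤ Real.sqrt ((‖w.1 - w'.1‖ + ‖w.2.1 - w'.2.1‖ + ‖w.2.2 - w'.2.2‖)^2) :=
        Real.sqrt_le_sqrt (by nlinarith)
    _ = _ := Real.sqrt_sq (by positivity)

lemma Dsum_comm {dx dy dz : ℕ} (w w' : Vec dx × Vec dy × Vec dz) :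
    Dsum w w' = Dsum w' w := by
  unfold Dsum
  rw [norm_sub_rev, norm_sub_rev w.2.1, norm_sub_rev w.2.2]

lemma Dsum_triangle {dx dy dz : ℕ} (a b c : Vec dx × Vec dy × Vec dz) :
    Dsum a c ≤ Dsum a b + Dsum b c := by
  unfold Dsum
  have t1 : ‖a.1 - c.1‖ ≤ ‖a.1 - b.1‖ + ‖b.1 - c.1‖ := norm_sub_le_norm_sub_add_norm_sub _ _ _
  have t2 : ‖a.2.1 - c.2.1‖ ≤ ‖a.2.1 - b.2.1‖ + ‖b.2.1 - c.2.1‖ :=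
    norm_sub_le_norm_sub_add_norm_sub _ _ _
  have t3 : ‖a.2.2 - c.2.2‖ ≤ ‖a.2.2 - b.2.2‖ + ‖b.2.2 - c.2.2‖ :=
    norm_sub_le_norm_sub_add_norm_sub _ _ _
  linarith

lemma grad_norm_le {d : ℕ} {l : ℝ} (hl : 0 ≤ l) (h : Vec d → ℝ)
    (hLip : ∀ u u', |h u - h u'| ≤ l * ‖u - u'‖) (u : Vec d) :
    ‖gradient h u‖ ≤ l := by
  have hlip : LipschitzWith l.toNNReal h := by
    apply LipschitzWith.of_dist_le_mul
    intro a b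
    simpa [Real.dist_eq, dist_eq_norm, Real.coe_toNNReal _ hl] using hLip a b
  have hf := norm_fderiv_le_of_lipschitz ℝ hlip (x₀ := u)
  have heq : ‖gradient h u‖ = ‖fderiv ℝ h u‖ := by
    rw [gradient]
    exact LinearIsometryEquiv.norm_map _ _
  rw [heq]
  simpa [Real.coe_toNNReal _ hl] using hf

section AuxSSGDA
variable {dx dy dz : ℕ} {Ξ Z2 : Type}

lemma step_move {l : ℝ} (hl : 0 ≤ l)
    (f : Vec dx × Vec dy × Vec dz → Ξ → ℝ) (g : Vec dx × Vec dy × Vec dz → Z2 → ℝ)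
    (hfLip : ∀ w w' ξ, |f w ξ - f w' ξ| ≤ l * jdist w w')
    (hgLip : ∀ w w' ζ, |g w ζ - g w' ζ| ≤ l * jdist w w')
    {η γ1 γ2 : ℝ} (hη : 0 ≤ η) (hγ1 : 0 ≤ γ1) (hγ2 : 0 ≤ γ2) (ξ : Ξ) (ζ : Z2)
    (w : Vec dx × Vec dy × Vec dz) :
    Dsum (ssgdaStep f g η γ1 γ2 ξ ζ w) w ≤ (η + γ1 + γ2) * l := by
  set w' := ssgdaStep f g η γ1 γ2 ξ ζ w with hw'
  have h1 : w'.2.1 = w.2.1 - γ1 • gradient (fun v => g (w.1, v, w.2.2) ζ) w.2.1 := rfl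
  have h2 : w'.2.2 = w.2.2 + γ2 • gradient (fun v => g (w.1, w'.2.1, v) ζ) w.2.2 := rfl
  have h3 : w'.1 = w.1 - η • gradient (fun u => f (u, w'.2.1, w'.2.2) ξ) w.1 := rfl
  have g1 : ‖gradient (fun v => g (w.1, v, w.2.2) ζ) w.2.1‖ ≤ l := by
    apply grad_norm_le hl
    intro v v'
    simpa [jdist, Real.sqrt_sq (norm_nonneg _)] using hgLip (w.1, v, w.2.2) (w.1, v', w.2.2) ζ
  have g2 : ‖gradient (fun v => g (w.1, w'.2.1, v) ζ) w.2.2‖ ≤ l := by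
    apply grad_norm_le hl
    intro v v'
    simpa [jdist, Real.sqrt_sq (norm_nonneg _)] using
      hgLip (w.1, w'.2.1, v) (w.1, w'.2.1, v') ζ
  have g3 : ‖gradient (fun u => f (u, w'.2.1, w'.2.2) ξ) w.1‖ ≤ l := by
    apply grad_norm_le hl
    intro u u'
    simpa [jdist, Real.sqrt_sq (norm_nonneg _)] using
      hfLip (u, w'.2.1, w'.2.2) (u', w'.2.1, w'.2.2) ξ
  have e1 : ‖w'.2.1 - w.2.1‖ ≤ γ1 * l := by
    rw [h1]
    simp only [sub_sub_cancel_left, norm_neg, norm_smul, Real.norm_eq_abs,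
      abs_of_nonneg hγ1]
    exact mul_le_mul_of_nonneg_left g1 hγ1
  have e2 : ‖w'.2.2 - w.2.2‖ ≤ γ2 * l := by
    rw [h2]
    simp only [add_sub_cancel_left, norm_smul, Real.norm_eq_abs, abs_of_nonneg hγ2]
    exact mul_le_mul_of_nonneg_left g2 hγ2
  have e3 : ‖w'.1 - w.1‖ ≤ η * l := by
    rw [h3]
    simp only [sub_sub_cancel_left, norm_neg, norm_smul, Real.norm_eq_abs,
      abs_of_nonneg hη]
    exact mul_le_mul_of_nonneg_left g3 hη
  unfold Dsum
  nlinarith [e1, e2, e3]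

lemma traj_bound {m1 m2 : ℕ} {l : ℝ} (hl : 0 ≤ l)
    (f : Vec dx × Vec dy × Vec dz → Ξ → ℝ) (g : Vec dx × Vec dy × Vec dz → Z2 → ℝ)
    (hfLip : ∀ w w' ξ, |f w ξ - f w' ξ| ≤ l * jdist w w')
    (hgLip : ∀ w w' ζ, |g w ζ - g w' ζ| ≤ l * jdist w w')
    {η γ1 γ2 : ℕ → ℝ} (hpos : ∀ t, 0 ≤ η t ∧ 0 ≤ γ1 t ∧ 0 ≤ γ2 t)
    (ξs : Fin m1 → Ξ) (ζs : Fin m2 → Z2) (I : ℕ → Fin m1) (J : ℕ → Fin m2)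
    (w0 : Vec dx × Vec dy × Vec dz) (t : ℕ) :
    Dsum (ssgda f g η γ1 γ2 ξs ζs I J w0 t) w0
      ≤ (∑ s ∈ range t, (η (s+1) + γ1 (s+1) + γ2 (s+1))) * l := by
  induction t with
  | zero => simp [ssgda, Dsum]
  | succ t ih =>
      have hstep := step_move hl f g hfLip hgLip (hpos (t+1)).1 (hpos (t+1)).2.1
        (hpos (t+1)).2.2 (ξs (I (t+1))) (ζs (J (t+1))) (ssgda f g η γ1 γ2 ξs ζs I J w0 t)
      have heq : ssgda f g η γ1 γ2 ξs ζs I J w0 (t+1)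
          = ssgdaStep f g (η (t+1)) (γ1 (t+1)) (γ2 (t+1)) (ξs (I (t+1))) (ζs (J (t+1)))
            (ssgda f g η γ1 γ2 ξs ζs I J w0 t) := rfl
      rw [← heq] at hstep
      have htri := Dsum_triangle (ssgda f g η γ1 γ2 ξs ζs I J w0 (t+1))
        (ssgda f g η γ1 γ2 ξs ζs I J w0 t) w0
      rw [sum_range_succ, add_mul]
      linarith

lemma ssgda_congr {m1 m2 : ℕ}
    (f : Vec dx × Vec dy × Vec dz → Ξ → ℝ) (g : Vec dx × Vec dy × Vec dz → Z2 → ℝ)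
    (η γ1 γ2 : ℕ → ℝ) (ξs ξs' : Fin m1 → Ξ) (ζs : Fin m2 → Z2)
    (I : ℕ → Fin m1) (J : ℕ → Fin m2) (w0 : Vec dx × Vec dy × Vec dz)
    (h : ∀ s, ξs (I s) = ξs' (I s)) (t : ℕ) :
    ssgda f g η γ1 γ2 ξs ζs I J w0 t = ssgda f g η γ1 γ2 ξs' ζs I J w0 t := by
  induction t with
  | zero => rfl
  | succ t ih => simp only [ssgda, ih, h]

end AuxSSGDA

lemma integral_mem_bounds {α : Type*} [MeasurableSpace α] (μ : Measure α)
    [IsProbabilityMeasure μ] {h : α → ℝ} {K : ℝ} (hK : 0 ≤ K)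
    (h0 : ∀ a, 0 ≤ h a) (h1 : ∀ a, h a ≤ K) :
    0 ≤ (∫ a, h a ∂μ) ∧ (∫ a, h a ∂μ) ≤ K := by
  constructor
  · exact integral_nonneg h0
  · by_cases hi : Integrable h μ
    · calc ∫ a, h a ∂μ ≤ ∫ _, K ∂μ := integral_mono hi (integrable_const K) h1
        _ = K := by simp
    · rw [integral_undef hi]
      exact hK

theorem stmt_3
    {dx dy dz : ℕ} {Ξ Z2 : Type} [MeasurableSpace Ξ] [MeasurableSpace Z2]
    (f : Vec dx × Vec dy × Vec dz → Ξ → ℝ)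
    (g : Vec dx × Vec dy × Vec dz → Z2 → ℝ)
    (l L : ℝ) (hl : 0 < l) (hL : 0 < L)
    -- joint Lipschitz continuity of `f` and `g` (`l = max{l_f, l_g}`)
    (hfLip : ∀ w w' ξ, |f w ξ - f w' ξ| ≤ l * jdist w w')
    (hgLip : ∀ w w' ζ, |g w ζ - g w' ζ| ≤ l * jdist w w')
    -- joint smoothness of `f` and `g` (`L = max{L_f, L_g}`)
    (hfSmooth : ∀ w w' ξ,
      jdist (jgrad (fun v => f v ξ) w) (jgrad (fun v => f v ξ) w') ≤ L * jdist w w')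
    (hgSmooth : ∀ w w' ζ,
      jdist (jgrad (fun v => g v ζ) w) (jgrad (fun v => g v ζ) w') ≤ L * jdist w w') :
    -- a constant depending only on `l, L, c1 = 1/7`, not on `T` or `m1`
    ∃ C : ℝ, 0 < C ∧
      ∀ (m1 m2 T : ℕ) (hT : 1 < T), 0 < m1 → 0 < m2 →
      ∀ (μ1 : Measure Ξ) (μ2 : Measure Z2),
        IsProbabilityMeasure μ1 → IsProbabilityMeasure μ2 →
      ∀ (η γ1 γ2 : ℕ → ℝ),
        -- non-increasing nonnegative step sizes
        Antitone η → Antitone γ1 → Antitone γ2 →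
        (∀ t, 0 ≤ η t ∧ 0 ≤ γ1 t ∧ 0 ≤ γ2 t) →
        -- `η^{t′} = max{η^t, γ1^t, γ2^t} ≤ c1/(tL) ≤ 1` with `c1 = 1/7`
        (∀ t : ℕ, 1 ≤ t →
          max (η t) (max (γ1 t) (γ2 t)) ≤ (1 / 7 : ℝ) / (t * L)
            ∧ (1 / 7 : ℝ) / (t * L) ≤ 1) →
      ∀ w0 : Vec dx × Vec dy × Vec dz,
        -- the on-average argument stability parameter `β` of SSGDA is at most
        -- `C·T·ln(T)/m1`; the expectation is over the validation set, its i.i.d. copy,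
        -- the training set, and the uniformly i.i.d. sampled indices
        (∫ ξs, ∫ ξt, ∫ ζs,
            (∑ I : Fin T → Fin m1, ∑ J : Fin T → Fin m2,
              (1 / (m1 : ℝ)) * ∑ i : Fin m1,
                jdist
                  (ssgda f g η γ1 γ2 ξs ζs
                    (extIdx (Nat.lt_trans Nat.one_pos hT) I)
                    (extIdx (Nat.lt_trans Nat.one_pos hT) J) w0 T)
                  (ssgda f g η γ1 γ2 (Function.update ξs i (ξt i)) ζs
                    (extIdx (Nat.lt_trans Nat.one_pos hT) I)
                    (extIdx (Nat.lt_trans Nat.one_pos hT) J) w0 T))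
              / ((Fintype.card (Fin T → Fin m1) : ℝ) * (Fintype.card (Fin T → Fin m2) : ℝ))
          ∂(Measure.pi fun _ : Fin m2 => μ2)
          ∂(Measure.pi fun _ : Fin m1 => μ1)
          ∂(Measure.pi fun _ : Fin m1 => μ1))
        ≤ C * T * Real.log T / m1 := by

  refine ⟨3 * l / L, by positivity, ?_⟩
  intro m1 m2 T hT hm1 hm2 μ1 μ2 hμ1 hμ2 η γ1 γ2 hηA hγ1A hγ2A hpos hmax w0
  haveI := hμ1; haveI := hμ2
  have hT0 : 0 < T := Nat.lt_trans Nat.one_pos hT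
  have hl0 : (0:ℝ) ≤ l := le_of_lt hl
  have hm1R : (0:ℝ) < (m1:ℝ) := by exact_mod_cast hm1
  -- log bounds
  have hT2 : (2:ℝ) ≤ (T:ℝ) := by exact_mod_cast hT
  have hlog2 : (0.6931471803 : ℝ) < Real.log 2 := Real.log_two_gt_d9
  have hlogT2 : Real.log 2 ≤ Real.log (T:ℝ) := Real.log_le_log (by norm_num) hT2
  have hlogpos : (1:ℝ)/2 ≤ Real.log (T:ℝ) := by linarith
  have h1log : 1 + Real.log (T:ℝ) ≤ 3 * Real.log (T:ℝ) := by linarith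
  -- step size sum bound
  have hsum : (∑ s ∈ range T, (η (s+1) + γ1 (s+1) + γ2 (s+1)))
      ≤ (3/(7*L)) * ((harmonic T : ℝ)) := by
    have hterm : ∀ s ∈ range T,
        η (s+1) + γ1 (s+1) + γ2 (s+1) ≤ (3/(7*L)) * ((s:ℝ)+1)⁻¹ := by
      intro s _
      have hm := (hmax (s+1) (Nat.le_add_left 1 s)).1
      have e1 : η (s+1) ≤ (1/7 : ℝ)/((s+1:ℕ) * L) := le_trans (le_max_left _ _) hm
      have e2 : γ1 (s+1) ≤ (1/7 : ℝ)/((s+1:ℕ) * L) :=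
        le_trans (le_trans (le_max_left _ _) (le_max_right _ _)) hm
      have e3 : γ2 (s+1) ≤ (1/7 : ℝ)/((s+1:ℕ) * L) :=
        le_trans (le_trans (le_max_right _ _) (le_max_right _ _)) hm
      have hc : ((s+1:ℕ):ℝ) = (s:ℝ) + 1 := by push_cast; ring
      rw [hc] at e1 e2 e3
      have hs1 : (0:ℝ) < (s:ℝ)+1 := by positivity
      have hkey : 3 * ((1/7:ℝ)/(((s:ℝ)+1) * L)) = (3/(7*L)) * ((s:ℝ)+1)⁻¹ := by
        field_simp
      linarith
    calc (∑ s ∈ range T, (η (s+1) + γ1 (s+1) + γ2 (s+1)))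
        ≤ ∑ s ∈ range T, (3/(7*L)) * ((s:ℝ)+1)⁻¹ := sum_le_sum hterm
      _ = (3/(7*L)) * ∑ s ∈ range T, ((s:ℝ)+1)⁻¹ := by rw [mul_sum]
      _ = (3/(7*L)) * ((harmonic T : ℝ)) := by
          congr 1
          rw [harmonic]
          push_cast
          ring
  have hharm : ((harmonic T : ℝ)) ≤ 1 + Real.log (T:ℝ) := harmonic_le_one_add_log T
  set B0 : ℝ := (3/(7*L)) * (1 + Real.log (T:ℝ)) * l with hB0def
  set Bd : ℝ := 2 * B0 with hBddef
  have hB00 : 0 ≤ B0 := by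
    apply mul_nonneg (mul_nonneg (by positivity) (by linarith)) hl0
  have hBd0 : 0 ≤ Bd := by rw [hBddef]; linarith
  -- per-trajectory bound
  have htrajB : ∀ (ξs : Fin m1 → Ξ) (ζs : Fin m2 → Z2) (I : ℕ → Fin m1) (J : ℕ → Fin m2),
      Dsum (ssgda f g η γ1 γ2 ξs ζs I J w0 T) w0 ≤ B0 := by
    intro ξs ζs I J
    calc Dsum (ssgda f g η γ1 γ2 ξs ζs I J w0 T) w0
        ≤ (∑ s ∈ range T, (η (s+1) + γ1 (s+1) + γ2 (s+1))) * l :=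
          traj_bound hl0 f g hfLip hgLip hpos ξs ζs I J w0 T
      _ ≤ ((3/(7*L)) * ((harmonic T : ℝ))) * l := mul_le_mul_of_nonneg_right hsum hl0
      _ ≤ B0 := by
          rw [hB0def]
          have h7 : (0:ℝ) ≤ 3/(7*L) := by positivity
          exact mul_le_mul_of_nonneg_right (mul_le_mul_of_nonneg_left hharm h7) hl0
  have hpair : ∀ (ξs ξs' : Fin m1 → Ξ) (ζs : Fin m2 → Z2) (I : ℕ → Fin m1) (J : ℕ → Fin m2),
      jdist (ssgda f g η γ1 γ2 ξs ζs I J w0 T) (ssgda f g η γ1 γ2 ξs' ζs I J w0 T) ≤ Bd := by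
    intro ξs ξs' ζs I J
    calc jdist (ssgda f g η γ1 γ2 ξs ζs I J w0 T) (ssgda f g η γ1 γ2 ξs' ζs I J w0 T)
        ≤ Dsum (ssgda f g η γ1 γ2 ξs ζs I J w0 T) (ssgda f g η γ1 γ2 ξs' ζs I J w0 T) :=
          jdist_le_Dsum _ _
      _ ≤ Dsum (ssgda f g η γ1 γ2 ξs ζs I J w0 T) w0
          + Dsum w0 (ssgda f g η γ1 γ2 ξs' ζs I J w0 T) := Dsum_triangle _ _ _
      _ ≤ B0 + B0 := by
          rw [Dsum_comm w0]
          exact add_le_add (htrajB ξs ζs I J) (htrajB ξs' ζs I J)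
      _ = Bd := by rw [hBddef]; ring
  -- per-I inner sum bound
  have hinner : ∀ (ξs ξt : Fin m1 → Ξ) (ζs : Fin m2 → Z2)
      (I : Fin T → Fin m1) (J : Fin T → Fin m2),
      (∑ i : Fin m1,
        jdist
          (ssgda f g η γ1 γ2 ξs ζs
            (extIdx (Nat.lt_trans Nat.one_pos hT) I)
            (extIdx (Nat.lt_trans Nat.one_pos hT) J) w0 T)
          (ssgda f g η γ1 γ2 (Function.update ξs i (ξt i)) ζs
            (extIdx (Nat.lt_trans Nat.one_pos hT) I)
            (extIdx (Nat.lt_trans Nat.one_pos hT) J) w0 T))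
      ≤ (T:ℝ) * Bd := by
    intro ξs ξt ζs I J
    calc (∑ i : Fin m1, jdist
          (ssgda f g η γ1 γ2 ξs ζs (extIdx (Nat.lt_trans Nat.one_pos hT) I)
            (extIdx (Nat.lt_trans Nat.one_pos hT) J) w0 T)
          (ssgda f g η γ1 γ2 (Function.update ξs i (ξt i)) ζs
            (extIdx (Nat.lt_trans Nat.one_pos hT) I)
            (extIdx (Nat.lt_trans Nat.one_pos hT) J) w0 T))
        ≤ ∑ i : Fin m1, (if i ∈ Finset.image I Finset.univ then Bd else 0) := by
          apply sum_le_sum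
          intro i _
          by_cases hmem : i ∈ Finset.image I Finset.univ
          · simp only [hmem, if_true]
            exact hpair _ _ _ _ _
          · simp only [hmem, if_false]
            have heq : ssgda f g η γ1 γ2 ξs ζs
                  (extIdx (Nat.lt_trans Nat.one_pos hT) I)
                  (extIdx (Nat.lt_trans Nat.one_pos hT) J) w0 T
                = ssgda f g η γ1 γ2 (Function.update ξs i (ξt i)) ζs
                  (extIdx (Nat.lt_trans Nat.one_pos hT) I)
                  (extIdx (Nat.lt_trans Nat.one_pos hT) J) w0 T := by
              apply ssgda_congr
              intro s
              have hne : extIdx (Nat.lt_trans Nat.one_pos hT) I s ≠ i := by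
                intro hcontra
                apply hmem
                simp only [extIdx] at hcontra
                exact hcontra ▸ Finset.mem_image_of_mem I (Finset.mem_univ _)
              exact (Function.update_of_ne hne _ _).symm
            rw [← heq]
            exact le_of_eq (jdist_self' _)
      _ = ((Finset.image I Finset.univ).card : ℝ) * Bd := by
          rw [Finset.sum_ite_mem, Finset.univ_inter, Finset.sum_const, nsmul_eq_mul]
      _ ≤ (T:ℝ) * Bd := by
          apply mul_le_mul_of_nonneg_right _ hBd0
          have h1 := Finset.card_image_le (f := I) (s := Finset.univ)
          have h2 : (Finset.univ : Finset (Fin T)).card = T := by simp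
          exact_mod_cast h2 ▸ h1
  -- pointwise bound on the full averaged quantity
  have hK0 : 0 ≤ (T:ℝ) * Bd / (m1:ℝ) :=
    div_nonneg (mul_nonneg (Nat.cast_nonneg T) hBd0) (le_of_lt hm1R)
  have hcard1 : (0:ℝ) < (Fintype.card (Fin T → Fin m1) : ℝ) := by
    haveI : Nonempty (Fin m1) := ⟨⟨0, hm1⟩⟩
    exact_mod_cast Fintype.card_pos
  have hcard2 : (0:ℝ) < (Fintype.card (Fin T → Fin m2) : ℝ) := by
    haveI : Nonempty (Fin m2) := ⟨⟨0, hm2⟩⟩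
    exact_mod_cast Fintype.card_pos
  have hSbound : ∀ (ξs ξt : Fin m1 → Ξ) (ζs : Fin m2 → Z2),
      0 ≤ ((∑ I : Fin T → Fin m1, ∑ J : Fin T → Fin m2,
              (1 / (m1 : ℝ)) * ∑ i : Fin m1,
                jdist
                  (ssgda f g η γ1 γ2 ξs ζs
                    (extIdx (Nat.lt_trans Nat.one_pos hT) I)
                    (extIdx (Nat.lt_trans Nat.one_pos hT) J) w0 T)
                  (ssgda f g η γ1 γ2 (Function.update ξs i (ξt i)) ζs
                    (extIdx (Nat.lt_trans Nat.one_pos hT) I)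
                    (extIdx (Nat.lt_trans Nat.one_pos hT) J) w0 T))
              / ((Fintype.card (Fin T → Fin m1) : ℝ) * (Fintype.card (Fin T → Fin m2) : ℝ)))
      ∧ ((∑ I : Fin T → Fin m1, ∑ J : Fin T → Fin m2,
              (1 / (m1 : ℝ)) * ∑ i : Fin m1,
                jdist
                  (ssgda f g η γ1 γ2 ξs ζs
                    (extIdx (Nat.lt_trans Nat.one_pos hT) I)
                    (extIdx (Nat.lt_trans Nat.one_pos hT) J) w0 T)
                  (ssgda f g η γ1 γ2 (Function.update ξs i (ξt i)) ζs
                    (extIdx (Nat.lt_trans Nat.one_pos hT) I)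
                    (extIdx (Nat.lt_trans Nat.one_pos hT) J) w0 T))
              / ((Fintype.card (Fin T → Fin m1) : ℝ) * (Fintype.card (Fin T → Fin m2) : ℝ)))
          ≤ (T:ℝ) * Bd / (m1:ℝ) := by
    intro ξs ξt ζs
    constructor
    · apply div_nonneg _ (le_of_lt (mul_pos hcard1 hcard2))
      apply sum_nonneg
      intro I _
      apply sum_nonneg
      intro J _
      apply mul_nonneg (by positivity)
      exact sum_nonneg fun i _ => jdist_nonneg' _ _
    · rw [div_le_iff₀ (mul_pos hcard1 hcard2)]
      calc (∑ I : Fin T → Fin m1, ∑ J : Fin T → Fin m2,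
              (1 / (m1 : ℝ)) * ∑ i : Fin m1,
                jdist
                  (ssgda f g η γ1 γ2 ξs ζs
                    (extIdx (Nat.lt_trans Nat.one_pos hT) I)
                    (extIdx (Nat.lt_trans Nat.one_pos hT) J) w0 T)
                  (ssgda f g η γ1 γ2 (Function.update ξs i (ξt i)) ζs
                    (extIdx (Nat.lt_trans Nat.one_pos hT) I)
                    (extIdx (Nat.lt_trans Nat.one_pos hT) J) w0 T))
          ≤ ∑ _I : Fin T → Fin m1, ∑ _J : Fin T → Fin m2,
              (1 / (m1 : ℝ)) * ((T:ℝ) * Bd) := by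
            apply sum_le_sum
            intro I _
            apply sum_le_sum
            intro J _
            exact mul_le_mul_of_nonneg_left (hinner ξs ξt ζs I J) (by positivity)
        _ = (Fintype.card (Fin T → Fin m1) : ℝ) * ((Fintype.card (Fin T → Fin m2) : ℝ)
              * ((1 / (m1 : ℝ)) * ((T:ℝ) * Bd))) := by
            simp [Finset.sum_const, Finset.card_univ, nsmul_eq_mul, mul_assoc]
        _ = (T:ℝ) * Bd / (m1:ℝ)
              * ((Fintype.card (Fin T → Fin m1) : ℝ) * (Fintype.card (Fin T → Fin m2) : ℝ)) := by
            ring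
  -- integrate the pointwise bound three times
  have hfinal : (T:ℝ) * Bd / (m1:ℝ) ≤ 3 * l / L * (T:ℝ) * Real.log (T:ℝ) / (m1:ℝ) := by
    rw [div_le_div_iff₀ hm1R hm1R]
    have hBdle : Bd ≤ (3*l/L) * Real.log (T:ℝ) := by
      rw [hBddef, hB0def]
      have e1 : (3/(7*L)) = (3/7) * L⁻¹ := by field_simp
      have e2 : 3*l/L = 3*l*L⁻¹ := by rw [div_eq_mul_inv]
      rw [e1, e2]
      have hLi : (0:ℝ) < L⁻¹ := inv_pos.mpr hL
      nlinarith [mul_le_mul_of_nonneg_right h1log (mul_nonneg hl0 hLi.le),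
        mul_nonneg (mul_nonneg hl0 hLi.le) (le_trans (by norm_num : (0:ℝ) ≤ 1/2) hlogpos)]
    have := mul_le_mul_of_nonneg_left hBdle (Nat.cast_nonneg T : (0:ℝ) ≤ (T:ℝ))
    nlinarith [this, hm1R]
  refine le_trans ?_ hfinal
  exact (integral_mem_bounds _ hK0
    (fun ξs => (integral_mem_bounds _ hK0
      (fun ξt => (integral_mem_bounds _ hK0
        (fun ζs => (hSbound ξs ξt ζs).1) (fun ζs => (hSbound ξs ξt ζs).2)).1)
      (fun ξt => (integral_mem_bounds _ hK0
        (fun ζs => (hSbound ξs ξt ζs).1) (fun ζs => (hSbound ξs ξt ζs).2)).2)).1)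
    (fun ξs => (integral_mem_bounds _ hK0
      (fun ξt => (integral_mem_bounds _ hK0
        (fun ζs => (hSbound ξs ξt ζs).1) (fun ζs => (hSbound ξs ξt ζs).2)).1)
      (fun ξt => (integral_mem_bounds _ hK0
        (fun ζs => (hSbound ξs ξt ζs).1) (fun ζs => (hSbound ξs ξt ζs).2)).2)).2)).2

end
end

section
/- Let α ∈ (0,1] and τ > 0, and let h : R^d → R be nonnegative and differentiable with (α, τ)-Hölder continuous gradient. Then for every w ∈ R^d, ||∇h(w)||_2 ≤ c_{α,τ} · h(w)^{α/(1+α)}, where c_{α,τ} = (1 + 1/α)^{α/(1+α)} · τ^{1/(1+α)}. -/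
/-!
STATEMENT 13: Let `α ∈ (0,1]`, `τ > 0`, and let `h : ℝ^d → ℝ` be nonnegative and
differentiable with `(α,τ)`-Hölder continuous gradient. Then for every `w`,
`‖∇h(w)‖ ≤ c_{α,τ} · h(w)^{α/(1+α)}` where `c_{α,τ} = (1 + 1/α)^{α/(1+α)} · τ^{1/(1+α)}`.
-/

open scoped RealInnerProductSpace


theorem descent13 {d : ℕ} (h : EuclideanSpace ℝ (Fin d) → ℝ) (α τ : ℝ)
    (hα : 0 < α) (hτ : 0 < τ)
    (hdiff : Differentiable ℝ h)
    (hholder : ∀ w w', ‖gradient h w - gradient h w'‖ ≤ τ * ‖w - w'‖ ^ α) :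
    ∀ w u, h (w + u) ≤ h w + ⟪gradient h w, u⟫ + τ / (1 + α) * ‖u‖ ^ (1 + α) := by
  intro w u
  rcases eq_or_ne u 0 with rfl | hu
  · simp only [add_zero, inner_zero_right, norm_zero]
    rw [Real.zero_rpow (by positivity)]
    simp
  have hu' : (0:ℝ) < ‖u‖ := norm_pos_iff.mpr hu
  have hcont : Continuous (gradient h) := by
    rw [continuous_iff_continuousAt]
    intro x
    rw [ContinuousAt, tendsto_iff_norm_sub_tendsto_zero]
    have hb : Filter.Tendsto (fun y => τ * ‖y - x‖ ^ α) (nhds x) (nhds 0) := by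
      have h1 : Filter.Tendsto (fun y : EuclideanSpace ℝ (Fin d) => ‖y - x‖) (nhds x) (nhds 0) := by
        simpa using tendsto_iff_norm_sub_tendsto_zero.mp (Filter.tendsto_id (x := nhds x))
      have h2 : Filter.Tendsto (fun t : ℝ => τ * t ^ α) (nhds 0) (nhds (τ * (0:ℝ) ^ α)) := by
        exact ((Real.continuousAt_rpow_const 0 α (Or.inr hα.le)).const_smul τ).tendsto
      rw [Real.zero_rpow hα.ne', mul_zero] at h2
      exact h2.comp h1
    apply squeeze_zero_norm _ hb
    intro y
    simpa using hholder y x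
  set γ : ℝ → EuclideanSpace ℝ (Fin d) := fun t => w + t • u with hγ
  have hder : ∀ t : ℝ, HasDerivAt (fun s => h (γ s)) ⟪gradient h (γ t), u⟫ t := by
    intro t
    have hγd : HasDerivAt γ u t := by
      have := ((hasDerivAt_id t).smul_const u).const_add w
      rw [one_smul] at this
      exact this
    have hF : HasFDerivAt h (InnerProductSpace.toDual ℝ _ (gradient h (γ t))) (γ t) :=
      (hdiff (γ t)).hasGradientAt.hasFDerivAt
    have := hF.comp_hasDerivAt t hγd
    rw [InnerProductSpace.toDual_apply_apply] at this
    exact this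
  have hcont2 : Continuous fun t : ℝ => ⟪gradient h (γ t), u⟫ := by
    apply Continuous.inner (hcont.comp (by fun_prop)) continuous_const
  have hFTC : h (w + u) - h w = ∫ t in (0:ℝ)..1, ⟪gradient h (γ t), u⟫ := by
    have := intervalIntegral.integral_eq_sub_of_hasDerivAt
      (f := fun s => h (γ s)) (a := 0) (b := 1)
      (fun t _ => hder t) (hcont2.intervalIntegrable 0 1)
    simp only [hγ, zero_smul, add_zero, one_smul] at this
    rw [this]
  -- pointwise bound
  have hpt : ∀ t ∈ Set.Icc (0:ℝ) 1,
      ⟪gradient h (γ t), u⟫ ≤ ⟪gradient h w, u⟫ + τ * ‖u‖ ^ (1 + α) * t ^ α := by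
    intro t ht
    have h1 : ⟪gradient h (γ t), u⟫ = ⟪gradient h w, u⟫ + ⟪gradient h (γ t) - gradient h w, u⟫ := by
      rw [inner_sub_left]; ring
    rw [h1]
    gcongr _ + ?_
    calc ⟪gradient h (γ t) - gradient h w, u⟫ ≤ ‖gradient h (γ t) - gradient h w‖ * ‖u‖ :=
          real_inner_le_norm _ _
      _ ≤ (τ * ‖γ t - w‖ ^ α) * ‖u‖ := by
          gcongr; exact hholder (γ t) w
      _ = τ * ‖u‖ ^ (1 + α) * t ^ α := by
          have : ‖γ t - w‖ = t * ‖u‖ := by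
            simp [hγ, norm_smul, abs_of_nonneg ht.1]
          rw [this, Real.mul_rpow ht.1 hu'.le, Real.rpow_add hu' 1, Real.rpow_one]
          ring
  have hint : (∫ t in (0:ℝ)..1, ⟪gradient h (γ t), u⟫) ≤
      ⟪gradient h w, u⟫ + τ / (1 + α) * ‖u‖ ^ (1 + α) := by
    have hib : IntervalIntegrable (fun t : ℝ => ⟪gradient h w, u⟫ + τ * ‖u‖ ^ (1 + α) * t ^ α)
        MeasureTheory.volume 0 1 := by
      apply IntervalIntegrable.add intervalIntegrable_const
      exact (intervalIntegral.intervalIntegrable_rpow (Or.inl (by linarith))).const_mul _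
    calc (∫ t in (0:ℝ)..1, ⟪gradient h (γ t), u⟫)
        ≤ ∫ t in (0:ℝ)..1, (⟪gradient h w, u⟫ + τ * ‖u‖ ^ (1 + α) * t ^ α) := by
          apply intervalIntegral.integral_mono_on (by norm_num)
            (hcont2.intervalIntegrable 0 1) hib hpt
      _ = ⟪gradient h w, u⟫ + τ / (1 + α) * ‖u‖ ^ (1 + α) := by
          rw [intervalIntegral.integral_add intervalIntegrable_const
            ((intervalIntegral.intervalIntegrable_rpow (Or.inl (by linarith))).const_mul _),
            intervalIntegral.integral_const, intervalIntegral.integral_const_mul,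
            integral_rpow (Or.inl (by linarith))]
          rw [Real.one_rpow, Real.zero_rpow (by positivity)]
          field_simp
          ring
  linarith [hFTC ▸ hint]

theorem stmt_13
    {d : ℕ} (h : EuclideanSpace ℝ (Fin d) → ℝ) (α τ : ℝ)
    (hα : 0 < α) (hα1 : α ≤ 1) (hτ : 0 < τ)
    (hnonneg : ∀ w, 0 ≤ h w)
    (hdiff : Differentiable ℝ h)
    (hholder : ∀ w w', ‖gradient h w - gradient h w'‖ ≤ τ * ‖w - w'‖ ^ α) :
    ∀ w, ‖gradient h w‖ ≤
      (1 + 1 / α) ^ (α / (1 + α)) * τ ^ (1 / (1 + α)) * h w ^ (α / (1 + α)) := by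
  intro w
  set g := gradient h w with hg
  set G := ‖g‖ with hG
  rcases eq_or_lt_of_le (norm_nonneg g) with hG0 | hGpos
  · rw [hG, ← hG0]
    have h1 : (0:ℝ) < 1/α := by positivity
    have h2 : (0:ℝ) ≤ 1 + 1/α := by linarith
    have h3 := hnonneg w
    positivity
  have hα' : (0:ℝ) < 1 + α := by linarith
  set t : ℝ := G ^ ((1 - α)/α) / τ ^ (1/α) with ht
  have htpos : 0 < t := by positivity
  have key := descent13 h α τ hα hτ hdiff hholder w (-(t • g))
  have e0 : ⟪g, -(t • g)⟫ = -(t * G ^ 2) := by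
    rw [inner_neg_right, real_inner_smul_right, real_inner_self_eq_norm_sq]
  have enorm : ‖-(t • g)‖ = t * G := by
    rw [norm_neg, norm_smul, Real.norm_eq_abs, abs_of_pos htpos]
  have e1 : t * G ^ 2 = G ^ ((1+α)/α) / τ ^ (1/α) := by
    rw [ht, div_mul_eq_mul_div, ← Real.rpow_two, ← Real.rpow_add hGpos]
    congr 2
    field_simp
    ring
  have e2 : (t * G) ^ (1+α) = G ^ ((1+α)/α) / τ ^ ((1+α)/α) := by
    have htG : t * G = G ^ (1/α) / τ ^ (1/α) := by
      rw [ht, div_mul_eq_mul_div, ← Real.rpow_add_one hGpos.ne']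
      congr 2
      field_simp
      ring
    rw [htG, Real.div_rpow (by positivity) (by positivity),
      ← Real.rpow_mul hGpos.le, ← Real.rpow_mul hτ.le]
    have hexp : 1/α * (1+α) = (1+α)/α := by ring
    rw [hexp]
  set X := G ^ ((1+α)/α) with hX
  set T := τ ^ (1/α) with hT
  set S := τ ^ ((1+α)/α) with hS
  have hTpos : 0 < T := by positivity
  have hSpos : 0 < S := by positivity
  have hXpos : 0 < X := by positivity
  have hST : S = τ * T := by
    rw [hS, hT]
    rw [show (1+α)/α = 1 + 1/α by field_simp <;> ring <;> ring, Real.rpow_add hτ, Real.rpow_one]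
  -- substitute into key
  rw [← hg, e0, enorm, e2, e1] at key
  have hkey2 : X ≤ (1 + 1/α) * T * h w := by
    have hnn := hnonneg (w + -(t • g))
    have expand : τ / (1+α) * (X / S) = X / ((1+α) * T) := by
      rw [hST]; field_simp
    rw [expand] at key
    have : X * α ≤ h w * ((1+α) * T) := by
      have h2 : 0 ≤ h w - X / T + X / ((1+α) * T) := by linarith
      have h3 : X / T - X / ((1+α) * T) ≤ h w := by linarith
      have h4 : X / T - X / ((1+α) * T) = X * α / ((1+α) * T) := by
        field_simp; ring
      rw [h4, div_le_iff₀ (by positivity)] at h3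
      linarith
    rw [show (1 + 1/α) * T * h w = h w * ((1+α) * T) / α by field_simp; ring,
      le_div_iff₀ hα]
    linarith
  -- raise to power α/(1+α)
  have hmono := Real.rpow_le_rpow hXpos.le hkey2 (by positivity : (0:ℝ) ≤ α/(1+α))
  have lhs_eq : X ^ (α/(1+α)) = G := by
    rw [hX, ← Real.rpow_mul hGpos.le]
    rw [show (1+α)/α * (α/(1+α)) = 1 by field_simp <;> ring <;> ring, Real.rpow_one]
  have rhs_eq : ((1 + 1/α) * T * h w) ^ (α/(1+α)) =
      (1 + 1/α) ^ (α/(1+α)) * τ ^ (1/(1+α)) * h w ^ (α/(1+α)) := by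
    have h1α : (0:ℝ) ≤ 1 + 1/α := by positivity
    rw [Real.mul_rpow (by positivity) (hnonneg w), Real.mul_rpow h1α hTpos.le]
    congr 1
    rw [hT, ← Real.rpow_mul hτ.le]
    rw [show 1/α * (α/(1+α)) = 1/(1+α) by field_simp <;> ring]
  rw [lhs_eq, rhs_eq] at hmono
  exact hmono
end
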